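/- arXiv:1803.07853 — 6 statements merged into one kernel-verified Lean document; each statement's English description precedes it below -/
import Mathlib

section
/- Let G be a group, B a central subgroup of G contained in a normal subgroup A of G. Then the group of automorphisms of G that induce the identity on both A and G/B is isomorphic to Hom(G/A, B). -/
/-- The subgroup of automorphisms of `G` inducing the identity on `A`
(i.e. fixing `A` pointwise) and on `G ⧸ B` (i.e. `x⁻¹ * α x ∈ B` for all `x`). -/
def autIndId {G : Type*} [Group G] (A B : Subgroup G) : Subgroup (MulAut G) where
  carrier := {α | (∀ a ∈ A, α a = a) ∧ ∀ x : G, x⁻¹ * α x ∈ B}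
  one_mem' := ⟨fun _ _ => rfl, fun x => by simpa using B.one_mem⟩
  mul_mem' := by
    rintro α β ⟨hα1, hα2⟩ ⟨hβ1, hβ2⟩
    refine ⟨fun a ha => by simp [MulAut.mul_apply, hβ1 a ha, hα1 a ha], fun x => ?_⟩
    have : x⁻¹ * (α * β) x = (x⁻¹ * β x) * ((β x)⁻¹ * α (β x)) := by
      simp [MulAut.mul_apply, mul_assoc]
    rw [this]
    exact B.mul_mem (hβ2 x) (hα2 (β x))
  inv_mem' := by
    rintro α ⟨hα1, hα2⟩
    refine ⟨fun a ha => α.injective (by simp [hα1 a ha]), fun x => ?_⟩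
    have : x⁻¹ * α⁻¹ x = ((α⁻¹ x)⁻¹ * α (α⁻¹ x))⁻¹ := by simp
    rw [this]
    exact B.inv_mem (hα2 (α⁻¹ x))

/-!
An automorphism `α` inducing the identity on `G ⧸ B` is `x ↦ x * δ x` with `δ x = x⁻¹ * α x ∈ B`.
Since `B` is central, `δ` is a homomorphism `G → B`, and it kills `A` exactly when `α` fixes `A`.
Conversely, for `f : G ⧸ A →* B` the map `x ↦ x * f x` is an automorphism, inverted by
`x ↦ x * (f x)⁻¹` because `f x ∈ B ≤ A` does not change the class of `x` modulo `A`.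
Composition corresponds to pointwise multiplication, again because `δ β x ∈ A` is fixed by `α`.
-/

namespace autIndId

variable {G : Type*} [Group G] {A B : Subgroup G} [A.Normal]

def toHom (hB : B ≤ Subgroup.center G) (α : autIndId A B) : G ⧸ A →* B :=
  QuotientGroup.lift A
    { toFun := fun x => ⟨x⁻¹ * (α : MulAut G) x, α.2.2 x⟩
      map_one' := by ext; simp
      map_mul' := fun x y => by
        ext
        have hcomm := Subgroup.mem_center_iff.mp (hB (α.2.2 x)) y⁻¹
        calc (x * y)⁻¹ * (α : MulAut G) (x * y)
            = y⁻¹ * (x⁻¹ * (α : MulAut G) x) * (α : MulAut G) y := by simp [mul_assoc]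
          _ = (x⁻¹ * (α : MulAut G) x) * (y⁻¹ * (α : MulAut G) y) := by
            rw [hcomm, mul_assoc] }
    (fun a ha => by ext; simp [α.2.1 a ha])

theorem coe_toHom_mk (hB : B ≤ Subgroup.center G) (α : autIndId A B) (x : G) :
    (toHom hB α (x : G ⧸ A) : G) = x⁻¹ * (α : MulAut G) x :=
  rfl

theorem coe_toHom_mul_apply (hBA : B ≤ A) (hB : B ≤ Subgroup.center G) (α β : autIndId A B)
    (x : G) :
    (toHom hB (α * β) (x : G ⧸ A) : G) = toHom hB α (x : G ⧸ A) * toHom hB β (x : G ⧸ A) := by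
  have hβx : (β : MulAut G) x = x * (x⁻¹ * (β : MulAut G) x) := by group
  have hfix : (α : MulAut G) (x⁻¹ * (β : MulAut G) x) = x⁻¹ * (β : MulAut G) x :=
    α.2.1 _ (hBA (β.2.2 x))
  simp only [coe_toHom_mk, Subgroup.coe_mul, MulAut.mul_apply]
  rw [hβx, map_mul, hfix]
  group

theorem toHom_injective (hB : B ≤ Subgroup.center G) :
    Function.Injective (toHom (A := A) hB) := fun α β h => by
  ext x
  have hx := congrArg (fun f : G ⧸ A →* B => (f (x : G ⧸ A) : G)) h
  simp only [coe_toHom_mk] at hx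
  exact mul_left_cancel hx

def ofHom (hBA : B ≤ A) (hB : B ≤ Subgroup.center G) (f : G ⧸ A →* B) : MulAut G where
  toFun x := x * f (x : G ⧸ A)
  invFun x := x * (f (x : G ⧸ A) : G)⁻¹
  left_inv x := by
    dsimp only
    rw [QuotientGroup.mk_mul_of_mem x (hBA (f _).2), mul_inv_cancel_right]
  right_inv x := by
    dsimp only
    rw [QuotientGroup.mk_mul_of_mem x (A.inv_mem (hBA (f _).2)), inv_mul_cancel_right]
  map_mul' x y := by
    have hcomm := Subgroup.mem_center_iff.mp (hB (f (x : G ⧸ A)).2) y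
    simp only [QuotientGroup.mk_mul, map_mul, Subgroup.coe_mul]
    rw [mul_assoc x y, ← mul_assoc y, hcomm]
    group

theorem ofHom_mem (hBA : B ≤ A) (hB : B ≤ Subgroup.center G) (f : G ⧸ A →* B) :
    ofHom hBA hB f ∈ autIndId A B := by
  refine ⟨fun a ha => ?_, fun x => ?_⟩
  · change a * f (a : G ⧸ A) = a
    simp [(QuotientGroup.eq_one_iff a).mpr ha]
  · change x⁻¹ * (x * f (x : G ⧸ A)) ∈ B
    simp

theorem toHom_ofHom (hBA : B ≤ A) (hB : B ≤ Subgroup.center G) (f : G ⧸ A →* B) :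
    toHom hB ⟨ofHom hBA hB f, ofHom_mem hBA hB f⟩ = f := by
  ext x
  change x⁻¹ * (x * f (x : G ⧸ A)) = f (x : G ⧸ A)
  group

end autIndId

/-- Alperin's lemma: if `B` is a central subgroup of `G` contained in a normal subgroup
`A`, then the group of automorphisms of `G` inducing the identity on both `A` and `G ⧸ B`
is isomorphic to `Hom(G ⧸ A, B)`. -/
theorem autIndId_mulEquiv_hom {G : Type*} [Group G] (A B : Subgroup G) [A.Normal]
    (hBA : B ≤ A) (hB : B ≤ Subgroup.center G) :
    letI : CommGroup B :=
      { (inferInstance : Group B) with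
        mul_comm := fun a b =>
          Subtype.ext ((Subgroup.mem_center_iff.mp (hB b.2) a)) }
    Nonempty (autIndId A B ≃* ((G ⧸ A) →* B)) := by
  let : CommGroup B :=
    { (inferInstance : Group B) with
      mul_comm := fun a b =>
        Subtype.ext ((Subgroup.mem_center_iff.mp (hB b.2) a)) }
  have toHom_mul (α β : autIndId A B) :
      autIndId.toHom hB (α * β) = autIndId.toHom hB α * autIndId.toHom hB β := by
    ext x
    exact autIndId.coe_toHom_mul_apply hBA hB α β x
  exact ⟨MulEquiv.ofBijective (MonoidHom.mk' (autIndId.toHom hB) toHom_mul)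
    ⟨autIndId.toHom_injective hB, fun f => ⟨_, autIndId.toHom_ofHom hBA hB f⟩⟩⟩
end

section
/- Let G be a finite p-group such that (G, Z(G)) is a Camina pair. If there exists a maximal subgroup M₁ of G with Z(G) strictly contained in Z(M₁), then |Z(G)| = p. -/
/-- `(G, Z(G))` is a Camina pair: `Z(G)` is a nontrivial proper (normal) subgroup and
`x * Z(G) ⊆ xᴳ` for every `x ∈ G \ Z(G)`. -/
def IsCaminaPairCenter (G : Type*) [Group G] : Prop :=
  Subgroup.center G ≠ ⊥ ∧ Subgroup.center G ≠ ⊤ ∧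
    ∀ x : G, x ∉ Subgroup.center G → ∀ z ∈ Subgroup.center G, IsConj x (x * z)

/-!
Pick `y ∈ Z(M₁) \ Z(G)`. Its centralizer contains `M₁`, so its conjugacy class has at most
`[G : M₁] = p` elements. The Camina property puts the coset `y Z(G)` inside that class, so
`|Z(G)| ≤ p`; and `Z(G)` is a nontrivial `p`-group, so `|Z(G)| ≥ p`.
-/

open MulAction Subgroup

-- A subgroup of order `p ^ (n + 1)` containing `M` exists by Sylow theory; maximality forces it
-- to be `G`.
theorem IsPGroup.index_eq_of_isCoatom {p : ℕ} [Fact p.Prime] {G : Type*} [Group G] [Finite G]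
    (hG : IsPGroup p G) {M : Subgroup G} (hM : IsCoatom M) : M.index = p := by
  obtain ⟨n, hMcard⟩ := (hG.to_subgroup M).exists_card_eq
  obtain ⟨k, hMindex⟩ := hG.index M
  have hk : k ≠ 0 := by
    rintro rfl
    exact hM.1 (index_eq_one.mp (by rw [hMindex, pow_zero]))
  have hdvd : p ^ (n + 1) ∣ Nat.card G := by
    rw [← M.card_mul_index, hMcard, hMindex, pow_succ]
    exact Nat.mul_dvd_mul_left _ (dvd_pow_self p hk)
  obtain ⟨K, hKcard, hMK⟩ := Sylow.exists_subgroup_card_pow_succ hdvd hMcard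
  have hKtop : K = ⊤ := hM.2 K <| hMK.lt_of_ne fun hMK' => by
    rw [← hMK', hMcard] at hKcard
    exact (Nat.pow_right_injective (Fact.out : p.Prime).two_le hKcard).not_lt n.lt_succ_self
  have hGcard : Nat.card G = p ^ n * p := by rw [← pow_succ, ← hKcard, hKtop, card_top]
  rw [← M.card_mul_index, hMcard] at hGcard
  exact Nat.eq_of_mul_eq_mul_left (pow_pos (Fact.out : p.Prime).pos n) hGcard

theorem Subgroup.index_centralizer_eq_card_orbit {G : Type*} [Group G] (g : G) :
    (centralizer {g}).index = Nat.card (orbit (ConjAct G) g) := by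
  rw [Nat.card_coe_set_eq, ← index_stabilizer]
  exact (congrArg index (centralizer_eq_comap_stabilizer g)).trans
    (index_comap_of_surjective _ ConjAct.toConjAct.surjective)

theorem IsCaminaPairCenter.card_center_le_card_orbit {G : Type*} [Group G] [Finite G]
    (hC : IsCaminaPairCenter G) {y : G} (hy : y ∉ center G) :
    Nat.card (center G) ≤ Nat.card (orbit (ConjAct G) y) :=
  Nat.card_le_card_of_injective
    (fun z : center G => ⟨y * z, ConjAct.mem_orbit_conjAct.mpr (hC.2.2 y hy z z.2).symm⟩)
    fun _ _ h => Subtype.ext (mul_left_cancel (congrArg Subtype.val h))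

/-- If `(G, Z(G))` is a Camina pair for a finite `p`-group `G` and some maximal
subgroup `M₁` satisfies `Z(G) < Z(M₁)`, then `|Z(G)| = p`. -/
theorem card_center_eq_of_lt_center_maximal {p : ℕ} [Fact p.Prime] {G : Type*} [Group G]
    [Finite G] (hp : IsPGroup p G) (hC : IsCaminaPairCenter G)
    (h : ∃ M₁ : Subgroup G, IsCoatom M₁ ∧
      Subgroup.center G < M₁ ⊓ Subgroup.centralizer (M₁ : Set G)) :
    Nat.card (Subgroup.center G) = p := by
  obtain ⟨M₁, hM₁, hlt⟩ := h
  obtain ⟨y, ⟨-, hyM₁⟩, hyZ⟩ := SetLike.exists_of_lt hlt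
  have hM₁y : M₁ ≤ centralizer {y} := fun m hm => by
    rw [mem_centralizer_singleton_iff]
    exact mem_centralizer_iff.mp hyM₁ m hm
  have hle : Nat.card (center G) ≤ p := calc
    Nat.card (center G) ≤ Nat.card (orbit (ConjAct G) y) := hC.card_center_le_card_orbit hyZ
    _ = (centralizer {y}).index := (index_centralizer_eq_card_orbit y).symm
    _ ≤ M₁.index := index_antitone hM₁y
    _ = p := hp.index_eq_of_isCoatom hM₁
  have hZ : Nontrivial (center G) := (nontrivial_iff_ne_bot _).mpr hC.1
  obtain ⟨n, hn, hcard⟩ := (hp.to_subgroup (center G)).nontrivial_iff_card.mp hZ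
  have hge : p ≤ Nat.card (center G) := hcard ▸ Nat.le_self_pow hn.ne' p
  omega
end

section
/- Let G be a finite p-group with Z(G) ≤ Φ(G) such that Z(G) = Z(M) for every maximal subgroup M of G. Then C_G(M) ≤ M for every maximal subgroup M of G. -/
/-- If `G` is a finite `p`-group with `Z(G) ≤ Φ(G)` such that `Z(G) = Z(M)` for every
maximal subgroup `M`, then `C_G(M) ≤ M` for every maximal subgroup `M`. -/
theorem centralizer_le_of_maximal {p : ℕ} [Fact p.Prime] {G : Type*} [Group G]
    [Finite G] (hp : IsPGroup p G) (hZ : Subgroup.center G ≤ frattini G)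
    (h : ∀ M : Subgroup G, IsCoatom M →
      M ⊓ Subgroup.centralizer (M : Set G) = Subgroup.center G) :
    ∀ M : Subgroup G, IsCoatom M → Subgroup.centralizer (M : Set G) ≤ M := by
  intro M hM g hg
  by_contra hgM
  -- Then M ⊔ ⟨g⟩ = ⊤ since M is a coatom.
  have htop : Subgroup.closure ((M : Set G) ∪ {g}) = ⊤ := by
    rw [Subgroup.closure_union, Subgroup.closure_eq]
    refine hM.2 _ (lt_of_le_of_ne le_sup_left ?_)
    intro hEq
    exact hgM (hEq ▸ SetLike.le_def.mp le_sup_right (Subgroup.subset_closure rfl : g ∈ Subgroup.closure {g}))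
  -- g commutes with everything, so g ∈ Z(G) ≤ Φ(G) ≤ M, contradiction.
  have hcenter : g ∈ Subgroup.center G := by
    rw [Subgroup.mem_center_iff]
    intro y
    have hy : y ∈ Subgroup.closure ((M : Set G) ∪ {g}) := htop ▸ Subgroup.mem_top y
    induction hy using Subgroup.closure_induction with
    | mem x hx =>
      rcases hx with hx | hx
      · exact hg x hx
      · simp at hx; subst hx; rfl
    | one => simp
    | mul a b _ _ ha hb => rw [mul_assoc, hb, ← mul_assoc, ha, mul_assoc]
    | inv a _ ha => exact (Commute.inv_left (ha : Commute a g) : Commute a⁻¹ g)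
  exact hgM (frattini_le_coatom hM (hZ hcenter))
end

section
/- Let G be a finite nonabelian p-group such that (G, Z(G)) is a Camina pair. Then Z(G) is elementary abelian. -/
/-- If `G` is a finite nonabelian `p`-group such that `(G, Z(G))` is a Camina pair,
then `Z(G)` is elementary abelian. -/
theorem center_elementaryAbelian_of_caminaPair {p : ℕ} [Fact p.Prime] {G : Type*} [Group G]
    [Finite G] (hp : IsPGroup p G) (hna : ∃ x y : G, x * y ≠ y * x)
    (hC : IsCaminaPairCenter G) :
    ∀ z ∈ Subgroup.center G, z ^ p = 1 := by
  intro z hz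
  -- The quotient G / Z(G) is a nontrivial p-group, so it has an element of order p.
  set Z := Subgroup.center G
  have hQ : IsPGroup p (G ⧸ Z) := hp.to_quotient Z
  have hQnt : Nontrivial (G ⧸ Z) := by
    obtain ⟨g, hg⟩ := not_forall.mp (fun h => hC.2.1 ((Subgroup.eq_top_iff' Z).mpr h))
    have hne : (g : G ⧸ Z) ≠ 1 := fun h => hg ((QuotientGroup.eq_one_iff g).mp h)
    exact ⟨_, _, hne⟩
  have hdvd : p ∣ Nat.card (G ⧸ Z) := by
    obtain ⟨n, hn⟩ := hQ.exists_card_eq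
    rcases Nat.eq_zero_or_pos n with h0 | h0
    · exfalso
      have := Nat.card_eq_one_iff_unique.mp (by simpa [h0] using hn)
      exact (not_subsingleton (G ⧸ Z)) this.1
    · rw [hn]; exact dvd_pow_self p h0.ne'
  obtain ⟨q, hq⟩ := exists_prime_orderOf_dvd_card' p hdvd
  obtain ⟨x, rfl⟩ := QuotientGroup.mk_surjective q
  have hxnot : x ∉ Z := by
    intro h
    have : (x : G ⧸ Z) = 1 := (QuotientGroup.eq_one_iff x).mpr h
    rw [this] at hq
    simp at hq
    exact (Fact.out : p.Prime).one_lt.ne' hq.symm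
  have hxp : x ^ p ∈ Z := by
    have : ((x ^ p : G) : G ⧸ Z) = 1 := by
      rw [QuotientGroup.mk_pow, ← hq, pow_orderOf_eq_one]
    exact (QuotientGroup.eq_one_iff _).mp this
  obtain ⟨c, hc⟩ := hC.2.2 x hxnot z hz
  -- hc : SemiconjBy c x (x * z), i.e. c * x = (x * z) * c
  have hcomm : Commute x z := (Subgroup.mem_center_iff.mp hz x)
  have hpow : c * x ^ p = (x * z) ^ p * c := (hc.pow_right p)
  have hxz : (x * z) ^ p = x ^ p * z ^ p := hcomm.mul_pow p
  have hcen : c * x ^ p = x ^ p * c := (Subgroup.mem_center_iff.mp hxp c)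
  have : x ^ p * c = x ^ p * z ^ p * c := by rw [← hcen, hpow, hxz]
  have h2 : x ^ p = x ^ p * z ^ p := mul_right_cancel this
  have := mul_left_cancel (h2.symm.trans (mul_one _).symm)
  exact this
end

section
/- Let G be a finite p-group such that (G, Z(G)) is a Camina pair and |Z(G)| ≥ p². Then the quotient Aut_c(G)/Inn(G) is nontrivial, i.e., G admits a class-preserving automorphism that is not inner. -/
/-!
The Camina condition makes every central element a commutator, so `Z(G) ≤ G'`. Compose the
quotient map of `G` onto a group of order `p` with an embedding of that group into `Z(G)`: the
resulting `f : G →* Z(G)` is nontrivial and kills `G' ≥ Z(G)`, so `x ↦ x * f x` is an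
automorphism, class-preserving by the Camina condition. If it were conjugation by `g`, then
`g ∉ Z(G)` since `f ≠ 1`, and the Camina condition at `g` would make `f` surjective, forcing
`|Z(G)| ≤ p`.
-/

open Subgroup
open scoped commutatorElement

theorem IsPGroup.exists_normal_index_eq {p : ℕ} [hp : Fact p.Prime] {G : Type*} [Group G]
    [Finite G] [Nontrivial G] (hG : IsPGroup p G) :
    ∃ H : Subgroup G, H.Normal ∧ H.index = p := by
  obtain ⟨n, hn0, hn⟩ := hG.nontrivial_iff_card.mp inferInstance
  obtain ⟨m, rfl⟩ := Nat.exists_eq_add_one_of_ne_zero hn0.ne'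
  obtain ⟨H, hH⟩ := Sylow.exists_subgroup_card_pow_prime p (hn ▸ pow_dvd_pow p m.le_succ)
  have hindex : H.index = p := by
    have := H.card_mul_index
    rw [hH, hn, pow_succ] at this
    exact Nat.eq_of_mul_eq_mul_left (pow_pos hp.out.pos m) this
  refine ⟨H, normal_of_index_eq_minFac_card ?_, hindex⟩
  rw [hindex, hn, hp.out.pow_minFac m.succ_ne_zero]

theorem exists_injective_monoidHom_of_card_eq_prime {p : ℕ} [Fact p.Prime] {Q A : Type*}
    [Group Q] [Group A] [Finite A] (hQ : Nat.card Q = p) (hA : p ∣ Nat.card A) :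
    ∃ φ : Q →* A, Function.Injective φ := by
  obtain ⟨a, ha⟩ := exists_prime_orderOf_dvd_card' p hA
  have : IsCyclic Q := isCyclic_of_prime_card hQ
  let e : Q ≃* zpowers a := mulEquivOfCyclicCardEq (by rw [hQ, Nat.card_zpowers, ha])
  exact ⟨(zpowers a).subtype.comp e.toMonoidHom, (zpowers a).subtype_injective.comp e.injective⟩

theorem IsPGroup.exists_monoidHom_ne_one_of_dvd_card {p : ℕ} [Fact p.Prime] {G A : Type*}
    [Group G] [Group A] [Finite G] [Nontrivial G] [Finite A] (hG : IsPGroup p G)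
    (hA : p ∣ Nat.card A) :
    ∃ f : G →* A, f ≠ 1 ∧ commutator G ≤ f.ker ∧ Nat.card f.range ≤ p := by
  obtain ⟨H, hH, hHp⟩ := hG.exists_normal_index_eq
  have hQ : Nat.card (G ⧸ H) = p := H.index_eq_card ▸ hHp
  obtain ⟨φ, hφ⟩ := exists_injective_monoidHom_of_card_eq_prime hQ hA
  obtain ⟨x, hx⟩ : ∃ x, x ∉ H := by
    by_contra! h
    exact (Fact.out : p.Prime).one_lt.ne' (hHp ▸ index_eq_one.mpr ((eq_top_iff' H).mpr h))
  refine ⟨φ.comp (QuotientGroup.mk' H), fun h1 => hx ?_, fun y hy => ?_, ?_⟩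
  · rw [← QuotientGroup.eq_one_iff, ← hφ.eq_iff, map_one]
    exact DFunLike.congr_fun h1 x
  · have hyH : y ∈ H := Normal.quotient_commutative_iff_commutator_le.mp
      (isCyclic_of_prime_card hQ).isMulCommutative hy
    simp [MonoidHom.mem_ker, (QuotientGroup.eq_one_iff y).mpr hyH]
  · calc Nat.card (φ.comp (QuotientGroup.mk' H)).range
        ≤ Nat.card φ.range := card_le_of_le (by rintro _ ⟨y, rfl⟩; exact ⟨_, rfl⟩)
      _ ≤ p := hQ ▸ Nat.le_of_dvd Nat.card_pos (card_range_dvd φ)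

theorem center_le_commutator_of_forall_isConj_mul {G : Type*} [Group G] {x : G}
    (hx : ∀ z ∈ center G, IsConj x (x * z)) : center G ≤ commutator G := by
  intro z hz
  obtain ⟨u, hu⟩ := isConj_iff.mp (hx z hz)
  have hz : ⁅x⁻¹, u⁆ = z := by
    rw [commutatorElement_def, inv_inv, mul_assoc x⁻¹ u x, mul_assoc, hu, inv_mul_cancel_left]
  rw [← hz, commutator_eq_closure]
  exact subset_closure (commutator_mem_commutatorSet _ _)

theorem IsCaminaPairCenter.center_le_commutator {G : Type*} [Group G]
    (hC : IsCaminaPairCenter G) : center G ≤ commutator G := by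
  obtain ⟨t, ht⟩ : ∃ t, t ∉ center G := by simpa [eq_top_iff'] using hC.2.1
  exact center_le_commutator_of_forall_isConj_mul (hC.2.2 t ht)

namespace MonoidHom

variable {G : Type*} [Group G] (f : G →* center G)

@[simps]
def idMulCentral : G →* G where
  toFun x := x * f x
  map_one' := by simp
  map_mul' x y := by
    simp only [map_mul, coe_mul]
    rw [mul_assoc x, ← mul_assoc y, mem_center_iff.mp (f x).2 y]
    group

variable {f}

theorem idMulCentral_injective (hf : center G ≤ f.ker) : Function.Injective f.idMulCentral := by
  refine (injective_iff_map_eq_one _).mpr fun x hx => ?_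
  have hxZ : x ∈ center G := by
    rw [idMulCentral_apply, mul_eq_one_iff_eq_inv] at hx
    exact hx ▸ inv_mem (f x).2
  simpa [mem_ker.mp (hf hxZ)] using hx

noncomputable def idMulCentralAut [Finite G] (hf : center G ≤ f.ker) : MulAut G :=
  MulEquiv.ofBijective f.idMulCentral <|
    Finite.injective_iff_bijective.mp (idMulCentral_injective hf)

@[simp]
theorem idMulCentralAut_apply [Finite G] (hf : center G ≤ f.ker) (x : G) :
    idMulCentralAut hf x = x * f x :=
  rfl

theorem isConj_idMulCentral (hC : IsCaminaPairCenter G) (hf : center G ≤ f.ker) (x : G) :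
    IsConj x (f.idMulCentral x) := by
  by_cases hx : x ∈ center G
  · simpa [mem_ker.mp (hf hx)] using IsConj.refl x
  · exact hC.2.2 x hx _ (f x).2

theorem eq_one_of_conj_eq_idMulCentral {g : G} (hg : g ∈ center G)
    (h : ∀ x, g * x * g⁻¹ = f.idMulCentral x) : f = 1 := by
  ext x
  have := h x
  rw [← mem_center_iff.mp hg x, mul_inv_cancel_right, idMulCentral_apply, left_eq_mul] at this
  simp [this]

theorem surjective_of_conj_eq_idMulCentral {g : G} (hg : ∀ z ∈ center G, IsConj g (g * z))
    (h : ∀ x, g * x * g⁻¹ = f.idMulCentral x) : Function.Surjective f := by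
  intro z
  obtain ⟨u, hu⟩ := isConj_iff.mp (hg z z.2)
  have hconj : g * u⁻¹ * g⁻¹ = u⁻¹ * z := by
    calc g * u⁻¹ * g⁻¹ = u⁻¹ * (u * g * u⁻¹) * g⁻¹ := by group
      _ = u⁻¹ * z := by rw [hu, mem_center_iff.mp z.2 g]; group
  refine ⟨u⁻¹, Subtype.ext ?_⟩
  rw [h, idMulCentral_apply] at hconj
  exact mul_left_cancel hconj

end MonoidHom

/-- If `(G, Z(G))` is a Camina pair for a finite `p`-group `G` with `|Z(G)| ≥ p ^ 2`, then
`G` admits a class-preserving automorphism that is not inner. -/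
theorem exists_classPreserving_not_inner {p : ℕ} [Fact p.Prime] {G : Type*} [Group G]
    [Finite G] (hp : IsPGroup p G) (hC : IsCaminaPairCenter G)
    (hZ : p ^ 2 ≤ Nat.card (Subgroup.center G)) :
    ∃ α : MulAut G, (∀ x : G, IsConj x (α x)) ∧
      α ∉ (MulAut.conj : G →* MulAut G).range := by
  have : Nontrivial G := by
    have := (nontrivial_iff_ne_bot _).mpr hC.1
    exact (center G).subtype_injective.nontrivial
  have hpZ : p ∣ Nat.card (center G) :=
    (hp.to_subgroup _).card_eq_or_dvd.resolve_left fun h => by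
      rw [h] at hZ
      exact absurd hZ (Nat.one_lt_pow two_ne_zero (Fact.out : p.Prime).one_lt).not_ge
  obtain ⟨f, hf1, hcomm, hrange⟩ := hp.exists_monoidHom_ne_one_of_dvd_card hpZ
  have hf : center G ≤ f.ker := hC.center_le_commutator.trans hcomm
  refine ⟨f.idMulCentralAut hf, f.isConj_idMulCentral hC hf, ?_⟩
  rintro ⟨g, hg⟩
  have hconj : ∀ x, g * x * g⁻¹ = f.idMulCentral x := fun x => by
    simpa using DFunLike.congr_fun hg x
  by_cases hgZ : g ∈ center G
  · exact hf1 (MonoidHom.eq_one_of_conj_eq_idMulCentral hgZ hconj)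
  · have hftop := f.range_eq_top.mpr
      (MonoidHom.surjective_of_conj_eq_idMulCentral (hC.2.2 g hgZ) hconj)
    rw [hftop, card_top] at hrange
    nlinarith [(Fact.out : p.Prime).two_le]
end

section
/- Let G be a finite p-group of nilpotence class 2 with |Z(G)| = p such that (G, Z(G)) is a Camina pair and |G| = p^n with n ≥ 3. Then |Aut_c(G)| ≤ p^{n-1} = |G/Z(G)|, so every class-preserving automorphism of G is inner. -/
open scoped IsMulCommutative commutatorElement

theorem card_monoidHom_le_card_of_isCyclic (A Z : Type*) [CommGroup A] [Finite A] [Group Z]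
    [Finite Z] [IsCyclic Z] : Nat.card (A →* Z) ≤ Nat.card A := by
  have : NeZero (Monoid.exponent A : ℂ) := ⟨by exact_mod_cast Monoid.exponent_ne_zero_of_finite⟩
  have : NeZero (Nat.card Z : ℂ) := ⟨by exact_mod_cast Nat.card_pos.ne'⟩
  have hdual := CommGroup.card_monoidHom_of_hasEnoughRootsOfUnity A ℂ
  have : Finite (A →* ℂˣ) := Nat.finite_of_card_ne_zero (hdual ▸ Nat.card_pos.ne')
  let ι : Z →* ℂˣ := (rootsOfUnity (Nat.card Z) ℂ).subtype.comp
    (mulEquivOfCyclicCardEq (HasEnoughRootsOfUnity.natCard_rootsOfUnity ℂ _).symm).toMonoidHom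
  have hι : Function.Injective ι := Subtype.val_injective.comp (MulEquiv.injective _)
  calc Nat.card (A →* Z) ≤ Nat.card (A →* ℂˣ) :=
        Nat.card_le_card_of_injective (ι.comp ·) fun f g h ↦ by
          ext x; exact hι (DFunLike.congr_fun h x)
    _ = Nat.card A := hdual

theorem card_monoidHom_le_card_abelianization (G Z : Type*) [Group G] [Finite G] [CommGroup Z]
    [Finite Z] [IsCyclic Z] : Nat.card (G →* Z) ≤ Nat.card (Abelianization G) :=
  (Nat.card_congr Abelianization.lift).trans_le
    (card_monoidHom_le_card_of_isCyclic _ _)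

namespace MulAut

variable {G : Type*} [Group G]

theorem ker_conj : (MulAut.conj : G →* MulAut G).ker = Subgroup.center G := by
  ext g
  simp only [MonoidHom.mem_ker, Subgroup.mem_center_iff, MulEquiv.ext_iff, conj_apply, one_apply]
  exact forall_congr' fun _ ↦ by rw [mul_inv_eq_iff_eq_mul, eq_comm]

theorem card_range_conj :
    Nat.card (MulAut.conj : G →* MulAut G).range = Nat.card (G ⧸ Subgroup.center G) := by
  rw [← ker_conj]
  exact (Nat.card_congr (QuotientGroup.quotientKerEquivRange _).toEquiv).symm

theorem mem_range_conj_of_card_le [Finite G]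
    (hcard : Nat.card {α : MulAut G // ∀ x : G, IsConj x (α x)} ≤
      Nat.card (G ⧸ Subgroup.center G))
    {α : MulAut G} (hα : ∀ x : G, IsConj x (α x)) : α ∈ (MulAut.conj : G →* MulAut G).range := by
  have hsub : ((MulAut.conj : G →* MulAut G).range : Set (MulAut G)) ⊆
      {α | ∀ x, IsConj x (α x)} := by
    rintro _ ⟨g, rfl⟩ x
    exact isConj_iff.mpr ⟨g, rfl⟩
  have hrange := Set.eq_of_subset_of_ncard_le hsub (by
    rw [← Nat.card_coe_set_eq, ← Nat.card_coe_set_eq]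
    exact hcard.trans card_range_conj.ge) (Set.toFinite _)
  exact hrange.symm.subset hα

def toCenterHom (α : MulAut G) (hα : ∀ x, x⁻¹ * α x ∈ Subgroup.center G) :
    G →* Subgroup.center G where
  toFun x := ⟨x⁻¹ * α x, hα x⟩
  map_one' := by simp
  map_mul' x y := by
    ext
    have hc := Subgroup.mem_center_iff.mp (hα x) y⁻¹
    simp only [map_mul, Subgroup.coe_mul, mul_inv_rev]
    calc y⁻¹ * x⁻¹ * (α x * α y) = y⁻¹ * (x⁻¹ * α x) * α y := by group
      _ = x⁻¹ * α x * (y⁻¹ * α y) := by rw [hc]; group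

theorem eq_of_toCenterHom_eq {α β : MulAut G} {hα : ∀ x, x⁻¹ * α x ∈ Subgroup.center G}
    {hβ : ∀ x, x⁻¹ * β x ∈ Subgroup.center G} (h : toCenterHom α hα = toCenterHom β hβ) :
    α = β := by
  ext x
  exact mul_left_cancel (congrArg Subtype.val (DFunLike.congr_fun h x))

end MulAut

theorem inv_mul_mem_center_of_isConj {G : Type*} [Group G]
    (hcl : commutator G ≤ Subgroup.center G) {x y : G} (h : IsConj x y) : x⁻¹ * y ∈ Subgroup.center G := by
  obtain ⟨c, rfl⟩ := isConj_iff.mp h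
  refine hcl ?_
  rw [show x⁻¹ * (c * x * c⁻¹) = ⁅x⁻¹, c⁆ by group]
  exact Subgroup.commutator_mem_commutator (Subgroup.mem_top _) (Subgroup.mem_top _)

theorem card_classPreserving_le_card_monoidHom_center {G : Type*} [Group G] [Finite G]
    (hcl : commutator G ≤ Subgroup.center G) :
    Nat.card {α : MulAut G // ∀ x : G, IsConj x (α x)} ≤ Nat.card (G →* Subgroup.center G) :=
  have : Finite (G →* Subgroup.center G) := Finite.of_injective _ DFunLike.coe_injective
  Nat.card_le_card_of_injective
    (fun α ↦ MulAut.toCenterHom α.1 fun x ↦ inv_mul_mem_center_of_isConj hcl (α.2 x))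
    fun _ _ h ↦ Subtype.ext (MulAut.eq_of_toCenterHom_eq h)

theorem Subgroup.eq_of_le_of_ne_bot_of_card_prime {G : Type*} [Group G] {H K : Subgroup G}
    (hHK : H ≤ K) (hH : H ≠ ⊥) (hK : (Nat.card K).Prime) : H = K := by
  have : Finite K := Nat.finite_of_card_ne_zero hK.ne_zero
  refine Subgroup.eq_of_le_of_card_ge hHK ?_
  have := (hK.eq_one_or_self_of_dvd _ (Subgroup.card_dvd_of_le hHK)).resolve_left
    (fun h ↦ hH (Subgroup.card_eq_one.mp h))
  rw [this]

theorem card_quotient_eq_pow_pred {G : Type*} [Group G] {H : Subgroup G}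
    {p n : ℕ} (hp : 1 < p) (hH : Nat.card H = p) (hG : Nat.card G = p ^ n) :
    Nat.card (G ⧸ H) = p ^ (n - 1) := by
  have h := H.card_eq_card_quotient_mul_card_subgroup
  rw [hG, hH] at h
  cases n with
  | zero => exact absurd (Nat.eq_one_of_mul_eq_one_left h.symm) hp.ne'
  | succ m => exact Nat.eq_of_mul_eq_mul_right (by omega) (h.symm.trans (pow_succ p m))

theorem card_classPreserving_le_general {p : ℕ} [Fact p.Prime] {G : Type*} [Group G]
    [Finite G] (hcl : commutator G ≤ Subgroup.center G) (hna : commutator G ≠ ⊥)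
    (hZ : Nat.card (Subgroup.center G) = p) {n : ℕ}
    (hcard : Nat.card G = p ^ n) :
    Nat.card {α : MulAut G // ∀ x : G, IsConj x (α x)} ≤ p ^ (n - 1) ∧
      p ^ (n - 1) = Nat.card (G ⧸ Subgroup.center G) ∧
      ∀ α : MulAut G, (∀ x : G, IsConj x (α x)) →
        α ∈ (MulAut.conj : G →* MulAut G).range := by
  have hp : p.Prime := Fact.out
  have hcomm : commutator G = Subgroup.center G :=
    Subgroup.eq_of_le_of_ne_bot_of_card_prime hcl hna (hZ ▸ hp)
  have hquot : Nat.card (G ⧸ Subgroup.center G) = p ^ (n - 1) :=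
    card_quotient_eq_pow_pred hp.one_lt hZ hcard
  have : IsCyclic (Subgroup.center G) := isCyclic_of_prime_card hZ
  have hbound : Nat.card {α : MulAut G // ∀ x : G, IsConj x (α x)} ≤ p ^ (n - 1) :=
    calc _ ≤ Nat.card (G →* Subgroup.center G) :=
          card_classPreserving_le_card_monoidHom_center hcl
      _ ≤ Nat.card (Abelianization G) := card_monoidHom_le_card_abelianization _ _
      _ = p ^ (n - 1) := by rw [Abelianization, hcomm, hquot]
  exact ⟨hbound, hquot.symm,
    fun α hα ↦ MulAut.mem_range_conj_of_card_le (hbound.trans hquot.ge) hα⟩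

/-- Let `G` be a finite `p`-group of nilpotence class 2 with `|Z(G)| = p` such that
`(G, Z(G))` is a Camina pair and `|G| = p ^ n` with `n ≥ 3`.  Then
`|Aut_c(G)| ≤ p ^ (n - 1) = |G ⧸ Z(G)|`, so every class-preserving automorphism is inner. -/
theorem card_classPreserving_le {p : ℕ} [Fact p.Prime] {G : Type*} [Group G]
    [Finite G] (hp : IsPGroup p G) (hC : IsCaminaPairCenter G)
    (hcl : commutator G ≤ Subgroup.center G) (hna : commutator G ≠ ⊥)
    (hZ : Nat.card (Subgroup.center G) = p) {n : ℕ} (hn : 3 ≤ n)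
    (hcard : Nat.card G = p ^ n) :
    Nat.card {α : MulAut G // ∀ x : G, IsConj x (α x)} ≤ p ^ (n - 1) ∧
      p ^ (n - 1) = Nat.card (G ⧸ Subgroup.center G) ∧
      ∀ α : MulAut G, (∀ x : G, IsConj x (α x)) →
        α ∈ (MulAut.conj : G →* MulAut G).range :=
  card_classPreserving_le_general hcl hna hZ hcard
end
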